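/- arXiv:2603.06015 — 2 statements merged into one kernel-verified Lean document; each statement's English description precedes it below -/
import Mathlib

section
/- Let a ∈ ℂ, h, q ∈ ℕ, d = (d_0,…,d_{p−1}) ∈ {0,1}^p, and let V be a 𝔗_{min(d_0,…,d_{p−1})}-module with annihilating level (h, q). Then the 𝔗-module M(V, a, d) is irreducible if and only if V is an irreducible 𝔗_{min(d_0,…,d_{p−1})}-module. -/
/-!
Let `W ≠ 0` be a submodule of `M(V, a, d)` and `U k = {v | v(k) ∈ W}`. Since `L₀` acts on
`v(k)` by the distinct scalars `a + k`, `W` is the direct sum of the `U k ⊗ x^k`. Letting `m`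
(resp. `b ≡ i₀ mod p`, where `d i₀` is minimal) vary in the formulas for `L_m · v(k)` and
`I_b · v(k)` and comparing coefficients of polynomials in `m` (resp. `b`) shows that `∑ U k`
and `⋂ U k` are `𝔗_{min d}`-submodules of `V`. If `V` is irreducible, then `∑ U k = V`, and
`ker I_h = 0` because it is a proper submodule. Applying `L_{t-b-k}` and then `I_b` to `v(k)`
and taking the top coefficient in `b` gives `I_h L_q (U k) ⊆ U t` for all `k`, `t`, so the
submodule `⋂ U t` contains `I_h L_q V ≠ 0`, whence every `U t = V` and `W = M(V, a, d)`.
Conversely, a submodule `W'` of `V` gives the submodule `W' ⊗ ℂ[x^{±1}]` of `M(V, a, d)`.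
-/

open Finsupp TensorProduct

attribute [local instance 100] LieRing.ofAssociativeRing

/-! ### Abstract presentation of the twisted Heisenberg-Virasoro algebra -/

/-- The twisted Heisenberg-Virasoro algebra: a complex Lie algebra with basis
`{L n, I n, CL, CLI, CI : n ∈ ℤ}` and the prescribed brackets. -/
structure TwistedHV where
  T : Type
  [lieRing : LieRing T]
  [lieAlg : LieAlgebra ℂ T]
  L : ℤ → T
  I : ℤ → T
  CL : T
  CLI : T
  CI : T
  basis : Module.Basis (ℤ ⊕ ℤ ⊕ Fin 3) ℂ T
  basis_eq : ∀ x, basis x = Sum.elim L (Sum.elim I ![CL, CLI, CI]) x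
  bracket_LL : ∀ m n : ℤ,
    ⁅L m, L n⁆ = ((n : ℂ) - (m : ℂ)) • L (m + n) +
      (if m + n = 0 then (((m : ℂ) ^ 3 - (m : ℂ)) / 12) • CL else 0)
  bracket_LI : ∀ m n : ℤ,
    ⁅L m, I n⁆ = (n : ℂ) • I (m + n) +
      (if m + n = 0 then ((m : ℂ) ^ 2 + (m : ℂ)) • CLI else 0)
  bracket_II : ∀ m n : ℤ,
    ⁅I m, I n⁆ = if m + n = 0 then (m : ℂ) • CI else 0
  central_CL : ∀ x : T, ⁅CL, x⁆ = 0
  central_CLI : ∀ x : T, ⁅CLI, x⁆ = 0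
  central_CI : ∀ x : T, ⁅CI, x⁆ = 0

attribute [instance] TwistedHV.lieRing TwistedHV.lieAlg

/-- The gap-`p` Virasoro algebra: `Lg n` represents `L_{p n}`, `Ig m` represents `I_m`
for `m` not divisible by `p`, and `Cg j` represents the central element `C_j` for
`0 ≤ j ≤ ⌊p/2⌋`. -/
structure GapVirasoro (p : ℕ) where
  g : Type
  [lieRing : LieRing g]
  [lieAlg : LieAlgebra ℂ g]
  Lg : ℤ → g
  Ig : ℤ → g
  Cg : ℕ → g
  basis : Module.Basis (ℤ ⊕ {m : ℤ // ¬ ((p : ℤ) ∣ m)} ⊕ {j : ℕ // j ≤ p / 2}) ℂ g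
  basis_eq : ∀ x, basis x = Sum.elim Lg (Sum.elim (fun m => Ig m.1) (fun j => Cg j.1)) x
  bracket_LL : ∀ m n : ℤ,
    ⁅Lg m, Lg n⁆ = ((p : ℂ) * ((n : ℂ) - (m : ℂ))) • Lg (m + n) +
      (if m + n = 0 then (((m : ℂ) ^ 3 - (m : ℂ)) / 12) • Cg 0 else 0)
  bracket_LI : ∀ m b : ℤ, ¬ ((p : ℤ) ∣ b) →
    ⁅Lg m, Ig b⁆ = (b : ℂ) • Ig ((p : ℤ) * m + b)
  bracket_II : ∀ a b : ℤ, ¬ ((p : ℤ) ∣ a) → ¬ ((p : ℤ) ∣ b) →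
    ⁅Ig a, Ig b⁆ =
      if a + b = 0 then (a : ℂ) • Cg (min ((a % (p : ℤ)).toNat) (p - (a % (p : ℤ)).toNat)) else 0
  central_C : ∀ j : ℕ, j ≤ p / 2 → ∀ x : g, ⁅Cg j, x⁆ = 0

attribute [instance] GapVirasoro.lieRing GapVirasoro.lieAlg

/-- The mirror Heisenberg-Virasoro algebra: `h n` represents `h_{n + 1/2}`. -/
structure MirrorHV where
  M : Type
  [lieRing : LieRing M]
  [lieAlg : LieAlgebra ℂ M]
  d : ℤ → M
  h : ℤ → M
  c : M
  l : M
  basis : Module.Basis (ℤ ⊕ ℤ ⊕ Fin 2) ℂ M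
  basis_eq : ∀ x, basis x = Sum.elim d (Sum.elim h ![c, l]) x
  bracket_dd : ∀ m n : ℤ,
    ⁅d m, d n⁆ = ((m : ℂ) - (n : ℂ)) • d (m + n) +
      (if m + n = 0 then (((m : ℂ) ^ 3 - (m : ℂ)) / 12) • c else 0)
  bracket_dh : ∀ m n : ℤ, ⁅d m, h n⁆ = (-((n : ℂ) + 1 / 2)) • h (m + n)
  bracket_hh : ∀ m n : ℤ,
    ⁅h m, h n⁆ = if m + n + 1 = 0 then ((m : ℂ) + 1 / 2) • l else 0
  central_c : ∀ x : M, ⁅c, x⁆ = 0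
  central_l : ∀ x : M, ⁅l, x⁆ = 0

attribute [instance] MirrorHV.lieRing MirrorHV.lieAlg

/-! ### Representations of the subalgebras `𝔗ₙ` -/

/-- A module over the subalgebra `𝔗ₙ = span{L k, I (n+k) : k ∈ ℕ}` of the twisted
Heisenberg-Virasoro algebra, encoded through the action operators (`IV m` is only
meaningful, and only constrained, for `m ≥ n`). -/
structure THVRep (n : ℕ) where
  V : Type
  [addCommGroup : AddCommGroup V]
  [module : Module ℂ V]
  LV : ℕ → Module.End ℂ V
  IV : ℕ → Module.End ℂ V
  comm_LL : ∀ k l : ℕ, ⁅LV k, LV l⁆ = ((l : ℂ) - (k : ℂ)) • LV (k + l)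
  comm_LI : ∀ k l : ℕ, n ≤ l → ⁅LV k, IV l⁆ = (l : ℂ) • IV (k + l)
  comm_II : ∀ k l : ℕ, n ≤ k → n ≤ l → ⁅IV k, IV l⁆ = 0

attribute [instance] THVRep.addCommGroup THVRep.module

namespace THVRep

variable {n : ℕ}

/-- A `𝔗ₙ`-module is restricted if every vector is annihilated by `L m` and `I m`
for all sufficiently large `m`. -/
def Restricted (R : THVRep n) : Prop :=
  ∀ v : R.V, ∃ N : ℕ, ∀ m : ℕ, N ≤ m → R.LV m v = 0 ∧ R.IV m v = 0

/-- `V` has annihilating level `(h, q)` (with `h ≥ n`). -/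
def AnnLevel (R : THVRep n) (h q : ℕ) : Prop :=
  n ≤ h ∧ (∃ v : R.V, R.IV h v ≠ 0) ∧ (∃ v : R.V, R.LV q v ≠ 0) ∧
    (∀ k : ℕ, h < k → ∀ v : R.V, R.IV k v = 0) ∧
    (∀ k : ℕ, q < k → ∀ v : R.V, R.LV k v = 0)

/-- Irreducibility of a `𝔗ₙ`-module. -/
def IsSimple (R : THVRep n) : Prop :=
  (∃ v : R.V, v ≠ 0) ∧
  ∀ W : Submodule ℂ R.V,
    (∀ k : ℕ, ∀ v ∈ W, R.LV k v ∈ W) →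
    (∀ m : ℕ, n ≤ m → ∀ v ∈ W, R.IV m v ∈ W) →
    W = ⊥ ∨ W = ⊤

end THVRep

/-- Isomorphism of `𝔗_r`-modules (both sides regarded as `𝔗_r`-modules by restriction). -/
def RepIso {n₁ n₂ : ℕ} (R : THVRep n₁) (S : THVRep n₂) (r : ℕ) : Prop :=
  ∃ ψ : R.V ≃ₗ[ℂ] S.V,
    (∀ k : ℕ, ∀ v : R.V, ψ (R.LV k v) = S.LV k (ψ v)) ∧
    (∀ m : ℕ, r ≤ m → ∀ v : R.V, ψ (R.IV m v) = S.IV m (ψ v))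

/-- `min {d i : i ∈ P}` (junk value `0` if `P = ∅`). -/
def finsetMin (P : Finset ℕ) (d : ℕ → ℕ) : ℕ :=
  if h : P.Nonempty then P.inf' h d else 0

/-- `min (d 0, …, d (p-1))`. -/
def dmin (p : ℕ) (d : ℕ → ℕ) : ℕ := finsetMin (Finset.range p) d

/-- The set `P - P = {(i - j) mod p : i, j ∈ P}`. -/
def PdiffP (p : ℕ) (P : Finset ℕ) : Finset ℕ :=
  Finset.image₂ (fun i j : ℕ => (((i : ℤ) - (j : ℤ)) % (p : ℤ)).toNat) P P

/-- The index set `𝒫 = {k ∈ ℤ : k mod p ∈ P}`. -/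
def PIdx (p : ℕ) (P : Finset ℕ) : Type :=
  {k : ℤ // ((k % (p : ℤ)).toNat) ∈ P}

lemma mem_shift {P : Finset ℕ} {q r k : ℤ} (h : (((r + k) % q).toNat) ∈ P) (m : ℤ) :
    (((q * m + r + k) % q).toNat) ∈ P := by
  have e : q * m + r + k = r + k + m * q := by ring
  rw [e, Int.add_mul_emod_self_right]
  exact h

lemma mem_shift0 {P : Finset ℕ} {q k : ℤ} (h : ((k % q).toNat) ∈ P) (m : ℤ) :
    (((q * m + k) % q).toNat) ∈ P := by
  have e : q * m + k = k + m * q := by ring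
  rw [e, Int.add_mul_emod_self_right]
  exact h

/-- Shift of an index `k ∈ 𝒫` by `p * m`. -/
def shiftIdx0 {p : ℕ} {P : Finset ℕ} (k : PIdx p P) (m : ℤ) : PIdx p P :=
  ⟨(p : ℤ) * m + k.1, mem_shift0 k.2 m⟩

/-! ### Representations, irreducibility and isomorphism -/

/-- Irreducibility of a representation `ρ` of a complex Lie algebra. -/
def IsIrreducibleRep {g : Type} [LieRing g] [LieAlgebra ℂ g]
    {M : Type} [AddCommGroup M] [Module ℂ M]
    (ρ : g →ₗ⁅ℂ⁆ Module.End ℂ M) : Prop :=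
  (∃ w : M, w ≠ 0) ∧
  ∀ W : Submodule ℂ M, (∀ x : g, ∀ w ∈ W, ρ x w ∈ W) → W = ⊥ ∨ W = ⊤

/-- Isomorphism of two representations of the same complex Lie algebra. -/
def RepModIso {g : Type} [LieRing g] [LieAlgebra ℂ g]
    {M₁ M₂ : Type} [AddCommGroup M₁] [Module ℂ M₁] [AddCommGroup M₂] [Module ℂ M₂]
    (ρ₁ : g →ₗ⁅ℂ⁆ Module.End ℂ M₁) (ρ₂ : g →ₗ⁅ℂ⁆ Module.End ℂ M₂) : Prop :=
  ∃ φ : M₁ ≃ₗ[ℂ] M₂, ∀ (x : g) (w : M₁), φ (ρ₁ x w) = ρ₂ x (φ w)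

/-- The action formulas defining the `𝔗`-module `M(V, a, d)` on `V ⊗ ℂ[x^{±1}] = ℤ →₀ V`. -/
def IsTHVAction (T : TwistedHV) (p : ℕ) (d : ℕ → ℕ) (a : ℂ) {n : ℕ} (R : THVRep n)
    (ρ : T.T →ₗ⁅ℂ⁆ Module.End ℂ (ℤ →₀ R.V)) : Prop :=
  (∀ (m k : ℤ) (v : R.V),
    ρ (T.L m) (Finsupp.single k v) =
      (a + (k : ℂ)) • Finsupp.single (m + k) v +
      ∑ᶠ j : ℕ, (((m : ℂ) ^ (j + 1)) / ((j + 1).factorial : ℂ)) •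
        Finsupp.single (m + k) (R.LV j v)) ∧
  (∀ (b k : ℤ) (v : R.V),
    ρ (T.I b) (Finsupp.single k v) =
      ∑ᶠ j : ℕ, (((b : ℂ) ^ (j + d ((b % (p : ℤ)).toNat))) /
          ((j + d ((b % (p : ℤ)).toNat)).factorial : ℂ)) •
        Finsupp.single (b + k) (R.IV (j + d ((b % (p : ℤ)).toNat)) v)) ∧
  ρ T.CL = 0 ∧ ρ T.CLI = 0 ∧ ρ T.CI = 0

/-- The action formulas defining the `𝔤`-module `M(V, a, d, P)` on `V ⊗ ℂ[P]`. -/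
def IsGapAction {p : ℕ} (G : GapVirasoro p) (P : Finset ℕ) (d : ℕ → ℕ) (a : ℂ)
    {n : ℕ} (R : THVRep n)
    (ρ : G.g →ₗ⁅ℂ⁆ Module.End ℂ (PIdx p P →₀ R.V)) : Prop :=
  (∀ (m : ℤ) (k : PIdx p P) (v : R.V),
    ρ (G.Lg m) (Finsupp.single k v) =
      (a + (k.1 : ℂ)) • Finsupp.single (shiftIdx0 k m) v +
      ∑ᶠ j : ℕ, (((((p : ℤ) * m : ℤ) : ℂ) ^ (j + 1)) / ((j + 1).factorial : ℂ)) •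
        Finsupp.single (shiftIdx0 k m) (R.LV j v)) ∧
  (∀ (m : ℤ) (i : ℕ), 1 ≤ i → i ≤ p - 1 → ∀ (k : PIdx p P) (v : R.V),
    ρ (G.Ig ((p : ℤ) * m + (i : ℤ))) (Finsupp.single k v) =
      if h : ((((i : ℤ) + k.1) % (p : ℤ)).toNat) ∈ P then
        ∑ᶠ j : ℕ, (((((p : ℤ) * m + (i : ℤ) : ℤ) : ℂ) ^ (j + d i)) / ((j + d i).factorial : ℂ)) •
          Finsupp.single (⟨(p : ℤ) * m + (i : ℤ) + k.1, mem_shift h m⟩ : PIdx p P)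
            (R.IV (j + d i) v)
      else 0) ∧
  (∀ j : ℕ, j ≤ p / 2 → ρ (G.Cg j) = 0)

/-- The operator `Ω^{(i,j,s)}_{l,m}` as an element of the universal enveloping algebra. -/
noncomputable def OmegaU (T : TwistedHV) (p : ℕ) (i j : ℕ) (l m : ℤ) (s : ℕ) :
    UniversalEnvelopingAlgebra ℂ T.T :=
  ∑ k ∈ Finset.range (s + 1),
    ((-1 : ℂ) ^ (s - k) * (s.choose k : ℂ)) •
      ((UniversalEnvelopingAlgebra.ι ℂ (T.I ((p : ℤ) * l - (p : ℤ) * m - (p : ℤ) * k + (i : ℤ)))) *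
       (UniversalEnvelopingAlgebra.ι ℂ (T.I ((p : ℤ) * m + (p : ℤ) * k + (j : ℤ)))))

/-- The action of the operator `Ω^{(i,j,s)}_{l,m}` in a representation `ρ`, where `Iop`
is the family of elements `I_n`. -/
noncomputable def OmegaOp {g : Type} [LieRing g] [LieAlgebra ℂ g]
    {M : Type} [AddCommGroup M] [Module ℂ M]
    (ρ : g →ₗ⁅ℂ⁆ Module.End ℂ M) (Iop : ℤ → g) (p : ℕ) (i j : ℕ) (l m : ℤ) (s : ℕ) :
    Module.End ℂ M :=
  ∑ k ∈ Finset.range (s + 1),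
    ((-1 : ℂ) ^ (s - k) * (s.choose k : ℂ)) •
      (ρ (Iop ((p : ℤ) * l - (p : ℤ) * m - (p : ℤ) * k + (i : ℤ))) *
       ρ (Iop ((p : ℤ) * m + (p : ℤ) * k + (j : ℤ))))

/-- The module of intermediate series `A(α, β, γ, Q)` over the gap-2 Virasoro algebra. -/
def IsARep (G : GapVirasoro 2) (α β γ : ℂ) (Q : Finset ℕ)
    (ρ : G.g →ₗ⁅ℂ⁆ Module.End ℂ (PIdx 2 Q →₀ ℂ)) : Prop :=
  (∀ (m : ℤ) (k : PIdx 2 Q),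
    ρ (G.Lg m) (Finsupp.single k (1 : ℂ)) =
      (α + 2 * β * (m : ℂ) + (k.1 : ℂ)) • Finsupp.single (shiftIdx0 k m) (1 : ℂ)) ∧
  (∀ (m : ℤ) (k : PIdx 2 Q),
    ρ (G.Ig (((2 : ℕ) : ℤ) * m + 1) ) (Finsupp.single k (1 : ℂ)) =
      if h : (((1 + k.1) % ((2 : ℕ) : ℤ)).toNat) ∈ Q then
        (if k.1 % 2 = 0 then (1 : ℂ) else γ) •
          Finsupp.single (⟨((2 : ℕ) : ℤ) * m + 1 + k.1, mem_shift h m⟩ : PIdx 2 Q) (1 : ℂ)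
      else 0) ∧
  ρ (G.Cg 0) = 0 ∧ ρ (G.Cg 1) = 0

/-- An irreducible highest weight representation of the gap-2 Virasoro algebra of level
`(c, h, l)`, i.e. a copy of `L(c, h, l)`. -/
def IsHWRep {HW : Type} [AddCommGroup HW] [Module ℂ HW]
    (G : GapVirasoro 2) (c h l : ℂ) (ρ : G.g →ₗ⁅ℂ⁆ Module.End ℂ HW) : Prop :=
  IsIrreducibleRep ρ ∧
  ∃ w₀ : HW, w₀ ≠ 0 ∧ ρ (G.Lg 0) w₀ = h • w₀ ∧
    ρ (G.Cg 0) w₀ = c • w₀ ∧ ρ (G.Cg 1) w₀ = l • w₀ ∧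
    (∀ m : ℕ, 1 ≤ m → ρ (G.Lg (m : ℤ)) w₀ = 0 ∧ ρ (G.Ig (2 * (m : ℤ) - 1)) w₀ = 0)

/-- `ρ₂` is a subquotient of `ρ₁`: there is an invariant submodule `W` and an
equivariant surjection `W → M₂`. -/
def IsSubquotientRep {g : Type} [LieRing g] [LieAlgebra ℂ g]
    {M₁ M₂ : Type} [AddCommGroup M₁] [Module ℂ M₁] [AddCommGroup M₂] [Module ℂ M₂]
    (ρ₁ : g →ₗ⁅ℂ⁆ Module.End ℂ M₁) (ρ₂ : g →ₗ⁅ℂ⁆ Module.End ℂ M₂) : Prop :=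
  ∃ W : Submodule ℂ M₁, ∃ hW : ∀ x : g, ∀ w ∈ W, ρ₁ x w ∈ W,
    ∃ π : W →ₗ[ℂ] M₂, Function.Surjective π ∧
      ∀ (x : g) (w : M₁) (hw : w ∈ W), π ⟨ρ₁ x w, hW x w hw⟩ = ρ₂ x (π ⟨w, hw⟩)

section Polynomial

open Polynomial

variable {K V : Type*} [Field K] [AddCommGroup V] [Module K V]

theorem Submodule.sum_coeff_smul_mem_of_forall_sum_eval_smul_mem {U : Submodule K V}
    {S : Set K} (hS : S.Infinite) {ι : Type*} {s : Finset ι} {g : ι → K[X]} {w : ι → V}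
    (h : ∀ y ∈ S, ∑ i ∈ s, (g i).eval y • w i ∈ U) (e : ℕ) :
    ∑ i ∈ s, (g i).coeff e • w i ∈ U := by
  by_contra hne
  obtain ⟨f, hfe, hUf⟩ := Submodule.exists_le_ker_of_notMem hne
  set P : K[X] := ∑ i ∈ s, C (f (w i)) * g i
  have hP : P = 0 := by
    refine eq_zero_of_infinite_isRoot P (hS.mono fun y hy => ?_)
    have := hUf (h y hy)
    simp only [LinearMap.mem_ker, map_sum, map_smul, smul_eq_mul] at this
    simpa [P, eval_finsetSum, mul_comm] using this
  apply hfe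
  simpa [P, finsetSum_coeff, mul_comm] using congr_arg (coeff · e) hP

theorem Submodule.mem_of_forall_sum_pow_div_smul_mem {U : Submodule K V}
    {S : Set K} (hS : S.Infinite) {ι : Type*} {s : Finset ι} {f : ι → ℕ} {c : ι → K}
    {w : ι → V} (hf : Set.InjOn f s) (hc : ∀ i ∈ s, c i ≠ 0)
    (h : ∀ y ∈ S, ∑ i ∈ s, (y ^ f i / c i) • w i ∈ U) {i : ι} (hi : i ∈ s) : w i ∈ U := by
  have key := Submodule.sum_coeff_smul_mem_of_forall_sum_eval_smul_mem hS
    (g := fun i => C (c i)⁻¹ * X ^ f i) (w := w)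
    (fun y hy => by simpa [div_eq_inv_mul] using h y hy) (f i)
  rwa [Finset.sum_eq_single_of_mem i hi fun j hj hji => by
      simp [coeff_C_mul, coeff_X_pow, (hf.ne hj hi hji).symm],
    coeff_C_mul, coeff_X_pow_self, mul_one, U.smul_mem_iff (inv_ne_zero (hc i hi))] at key

theorem Polynomial.coeff_C_sub_X_pow_self {K : Type*} [CommRing K] (r : K) (l : ℕ) :
    ((C r - X) ^ l).coeff l = (-1) ^ l := by
  have := coeff_pow_of_natDegree_le (m := l) (p := C r - X) (n := 1) (by compute_degree)
  rw [mul_one] at this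
  simp [this]

end Polynomial

theorem Finsupp.eq_submodule_comap_lsingle_of_diagonal {ι K V : Type*} [Field K]
    [AddCommGroup V] [Module K V] {W : Submodule K (ι →₀ V)} {D : Module.End K (ι →₀ V)}
    {c : ι → K} (hc : Function.Injective c) (hD : ∀ f i, D f i = c i • f i)
    (hW : ∀ f ∈ W, D f ∈ W) : W = Finsupp.submodule fun i => W.comap (Finsupp.lsingle i) := by
  classical
  refine le_antisymm (fun f hf i => ?_) ?_
  swap
  · rw [Finsupp.submodule_eq_iSup]
    exact iSup_le fun i => Submodule.map_comap_le _ _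
  suffices ∀ s : Finset ι, ∀ f ∈ W, f.support ⊆ insert i s → Finsupp.single i (f i) ∈ W from
    this _ f hf (Finset.subset_insert _ _)
  intro s
  induction s using Finset.induction_on with
  | empty =>
    intro f hf hs
    rwa [← Finsupp.support_subset_singleton.mp hs]
  | insert j s _ ih =>
    intro f hf hs
    by_cases hji : j = i
    · subst hji
      exact ih f hf (by simpa using hs)
    have hD' : ∀ x, (D f - c j • f) x = (c x - c j) • f x := fun x => by
      simp [hD, sub_smul]
    have hsupp : (D f - c j • f).support ⊆ insert i s := by
      intro x hx
      have hx' : (c x - c j) • f x ≠ 0 := by simpa [hD'] using hx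
      have hxj : x ≠ j := fun hxj => hx' (by simp [hxj])
      have := hs (Finsupp.mem_support_iff.mpr (right_ne_zero_of_smul hx'))
      simp only [Finset.mem_insert] at this ⊢
      tauto
    have := ih _ (sub_mem (hW f hf) (W.smul_mem _ hf)) hsupp
    rwa [hD', ← Finsupp.smul_single, W.smul_mem_iff (sub_ne_zero.mpr (hc.ne (Ne.symm hji)))]
      at this

theorem TwistedHV.eq_top_of_generators_mem (T : TwistedHV) {S : Submodule ℂ T.T}
    (hL : ∀ m, T.L m ∈ S) (hI : ∀ m, T.I m ∈ S) (hCL : T.CL ∈ S) (hCLI : T.CLI ∈ S)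
    (hCI : T.CI ∈ S) : S = ⊤ := by
  rw [eq_top_iff, ← T.basis.span_eq, Submodule.span_le]
  rintro _ ⟨x | x | j, rfl⟩ <;> rw [T.basis_eq]
  · exact hL x
  · exact hI x
  · fin_cases j <;> assumption

section dmin

variable {p : ℕ} {d : ℕ → ℕ}

theorem dmin_le_of_lt {i : ℕ} (hi : i < p) : dmin p d ≤ d i := by
  rw [dmin, finsetMin, dif_pos ⟨i, Finset.mem_range.mpr hi⟩]
  exact Finset.inf'_le d (Finset.mem_range.mpr hi)

theorem exists_lt_eq_dmin (hp : 0 < p) : ∃ i < p, d i = dmin p d := by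
  have hne := Finset.nonempty_range_iff.mpr hp.ne'
  obtain ⟨i, hi, heq⟩ := Finset.exists_mem_eq_inf' hne d
  exact ⟨i, Finset.mem_range.mp hi, by rw [dmin, finsetMin, dif_pos hne, heq]⟩

theorem Int.toNat_emod_lt (hp : 0 < p) (b : ℤ) : (b % p).toNat < p := by
  have := Int.emod_lt_of_pos b (Int.natCast_pos.mpr hp)
  omega

theorem infinite_setOf_eq_dmin (hp : 0 < p) :
    {b : ℤ | d ((b % p).toNat) = dmin p d}.Infinite := by
  obtain ⟨i, hi, hdi⟩ := exists_lt_eq_dmin (d := d) hp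
  refine Set.infinite_of_injective_forall_mem (f := fun m : ℤ => p * m + i)
    (fun m m' hm => ?_) fun m => ?_
  · simpa [hp.ne'] using hm
  · simp [Int.emod_eq_of_lt, hi, hdi]

end dmin

namespace THVRep

open Finset Polynomial

variable {n : ℕ} (R : THVRep n)

def Invariant (W : Submodule ℂ R.V) : Prop :=
  (∀ k : ℕ, ∀ v ∈ W, R.LV k v ∈ W) ∧ (∀ m : ℕ, n ≤ m → ∀ v ∈ W, R.IV m v ∈ W)

theorem IsSimple.eq_bot_or_eq_top {R : THVRep n} (hR : R.IsSimple) {W : Submodule ℂ R.V}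
    (hW : R.Invariant W) : W = ⊥ ∨ W = ⊤ :=
  hR.2 W hW.1 hW.2

/-- The `V`-parts of `L_m · v(k) - (a + k) v(m + k)` and of `I_b · v(k)` (when `d_b = n`),
with the sums cut off at the annihilating level `(h, q)`. -/
noncomputable def expSumL (q : ℕ) (m : ℂ) (v : R.V) : R.V :=
  ∑ l ∈ range (q + 1), (m ^ (l + 1) / ((l + 1).factorial : ℂ)) • R.LV l v

noncomputable def expSumI (h : ℕ) (b : ℂ) (v : R.V) : R.V :=
  ∑ e ∈ Ico n (h + 1), (b ^ e / (e.factorial : ℂ)) • R.IV e v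

variable {R} {h q : ℕ}

namespace AnnLevel

theorem LV_eq_zero (hlev : R.AnnLevel h q) {l : ℕ} (hl : q < l) : R.LV l = 0 :=
  LinearMap.ext (hlev.2.2.2.2 l hl)

theorem IV_eq_zero (hlev : R.AnnLevel h q) {e : ℕ} (he : h < e) : R.IV e = 0 :=
  LinearMap.ext (hlev.2.2.2.1 e he)

theorem LV_ne_zero (hlev : R.AnnLevel h q) : R.LV q ≠ 0 := fun h0 => by
  obtain ⟨v, hv⟩ := hlev.2.2.1
  exact hv (by rw [h0, LinearMap.zero_apply])

theorem IV_ne_zero (hlev : R.AnnLevel h q) : R.IV h ≠ 0 := fun h0 => by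
  obtain ⟨v, hv⟩ := hlev.2.1
  exact hv (by rw [h0, LinearMap.zero_apply])

end AnnLevel

theorem invariant_ker_IV (hnh : n ≤ h) (hIh : ∀ e, h < e → R.IV e = 0) :
    R.Invariant (LinearMap.ker (R.IV h)) := by
  refine ⟨fun l v hv => ?_, fun m hm v hv => ?_⟩
  -- `[L_l, I_h] = h I_{l+h}` vanishes on `ker I_h`, as `I_{l+h} = 0` for `l > 0`
  · have hbr := LinearMap.congr_fun (R.comm_LI l h hnh) v
    have hlh : R.IV (l + h) v = 0 := by
      rcases l.eq_zero_or_pos with rfl | hl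
      · simpa using hv
      · simp [hIh (l + h) (by omega)]
    rw [Ring.lie_def] at hbr
    simp_all [LinearMap.mem_ker]
  · have hbr := LinearMap.congr_fun (R.comm_II h m hnh hm) v
    rw [Ring.lie_def] at hbr
    simp_all [LinearMap.mem_ker]

theorem ker_IV_eq_bot (hR : R.IsSimple) (hnh : n ≤ h) (hIh : ∀ e, h < e → R.IV e = 0)
    (hne : R.IV h ≠ 0) : LinearMap.ker (R.IV h) = ⊥ :=
  (hR.eq_bot_or_eq_top (invariant_ker_IV hnh hIh)).resolve_right
    (fun htop => hne (LinearMap.ker_eq_top.mp htop))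

theorem LV_mem_of_forall_expSumL_mem (hLq : ∀ l, q < l → R.LV l = 0)
    {U : Submodule ℂ R.V} {B : Set ℤ} (hB : B.Infinite) {v : R.V}
    (hv : ∀ m ∈ B, R.expSumL q m v ∈ U) (l : ℕ) : R.LV l v ∈ U := by
  by_cases hl : q < l
  · simp [hLq l hl]
  refine U.mem_of_forall_sum_pow_div_smul_mem (hB.image Int.cast_injective.injOn)
    (s := range (q + 1)) (f := (· + 1)) (c := fun l => ((l + 1).factorial : ℂ))
    (w := (R.LV · v)) (fun _ _ _ _ => Nat.succ.inj)
    (fun _ _ => Nat.cast_ne_zero.mpr (Nat.factorial_ne_zero _)) ?_ (i := l)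
    (mem_range.mpr (by omega))
  rintro _ ⟨m, hm, rfl⟩
  exact hv m hm

theorem IV_mem_of_forall_expSumI_mem (hIh : ∀ e, h < e → R.IV e = 0)
    {U : Submodule ℂ R.V} {B : Set ℤ} (hB : B.Infinite) {v : R.V}
    (hv : ∀ b ∈ B, R.expSumI h b v ∈ U) {e : ℕ} (he : n ≤ e) : R.IV e v ∈ U := by
  by_cases hel : h < e
  · simp [hIh e hel]
  refine U.mem_of_forall_sum_pow_div_smul_mem (hB.image Int.cast_injective.injOn)
    (s := Ico n (h + 1)) (f := id) (c := fun e => (e.factorial : ℂ))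
    (w := (R.IV · v)) Function.injective_id.injOn
    (fun _ _ => Nat.cast_ne_zero.mpr (Nat.factorial_ne_zero _)) ?_ (i := e)
    (mem_Ico.mpr ⟨he, by omega⟩)
  rintro _ ⟨b, hb, rfl⟩
  exact hv b hb

theorem IV_LV_mem_of_forall_expSumI_expSumL_mem {U : Submodule ℂ R.V} {B : Set ℤ}
    (hB : B.Infinite) (hnh : n ≤ h) {c r : ℂ} {v : R.V}
    (hv : ∀ b ∈ B, R.expSumI h b (c • v + R.expSumL q (r - b) v) ∈ U) :
    R.IV h (R.LV q v) ∈ U := by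
  set s : Finset (ℕ × Option ℕ) := Ico n (h + 1) ×ˢ (range (q + 1)).insertNone
  set g : ℕ × Option ℕ → ℂ[X] := fun i => C (i.1.factorial : ℂ)⁻¹ * X ^ i.1 *
    i.2.elim (C c) (fun l => C ((l + 1).factorial : ℂ)⁻¹ * (C r - X) ^ (l + 1))
  set w : ℕ × Option ℕ → R.V := fun i => R.IV i.1 (i.2.elim v (R.LV · v))
  have hexp : ∀ b : ℂ, R.expSumI h b (c • v + R.expSumL q (r - b) v) =
      ∑ i ∈ s, (g i).eval b • w i := fun b => by
    simp only [expSumI, expSumL, s, sum_product, sum_insertNone, g, w, map_add, map_smul,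
      map_sum, smul_add, Finset.smul_sum, smul_smul, eval_mul, eval_C, eval_X, eval_pow,
      eval_sub, Option.elim]
    exact Finset.sum_congr rfl fun e _ =>
      congr_arg₂ _ (by ring_nf) (Finset.sum_congr rfl fun l _ => by ring_nf)
  have hcoeff := U.sum_coeff_smul_mem_of_forall_sum_eval_smul_mem
    (hB.image Int.cast_injective.injOn) (g := g) (w := w) (s := s)
    (by rintro _ ⟨b, hb, rfl⟩; rw [← hexp]; exact hv b hb) (h + (q + 1))
  -- only `X ^ h * (C r - X) ^ (q + 1)` reaches degree `h + (q + 1)`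
  have htop : ∑ i ∈ s, (g i).coeff (h + (q + 1)) • w i =
      ((h.factorial : ℂ)⁻¹ * ((q + 1).factorial : ℂ)⁻¹ * (-1) ^ (q + 1)) • R.IV h (R.LV q v) := by
    rw [sum_eq_single_of_mem (h, some q) (by simp [s, hnh])]
    · simp only [g, w, Option.elim]
      rw [mul_assoc, coeff_C_mul, coeff_X_pow_mul', if_pos (by omega), Nat.add_sub_cancel_left,
        coeff_C_mul, coeff_C_sub_X_pow_self, mul_assoc]
    rintro ⟨e, _ | l⟩ hi hne <;> simp only [s, mem_product, mem_Ico, mem_insertNone,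
      Option.mem_def, mem_range] at hi
    · simp only [g, Option.elim, coeff_mul_C, coeff_C_mul, coeff_X_pow,
        if_neg (show h + (q + 1) ≠ e by omega), mul_zero, zero_mul, zero_smul]
    · have hlt : e + (l + 1) < h + (q + 1) := by
        have := hi.2 l rfl
        by_contra
        exact hne (by rw [show e = h by omega, show l = q by omega])
      have hdeg : (g (e, some l)).natDegree ≤ e + (l + 1) := by
        simp only [g, Option.elim]
        compute_degree
      rw [coeff_eq_zero_of_natDegree_lt (hdeg.trans_lt hlt), zero_smul]
  rw [htop] at hcoeff
  exact (U.smul_mem_iff (by simp [Nat.factorial_ne_zero])).mp hcoeff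

/-- The closure properties of `U k = {v | v(k) ∈ W}` for a submodule `W` of `M(V, a, d)`, where
`B` is the set of `b` with `d_b = n`. -/
structure IsComponentFamily (R : THVRep n) (a : ℂ) (h q : ℕ) (B : Set ℤ)
    (U : ℤ → Submodule ℂ R.V) : Prop where
  expSumL_mem : ∀ k m : ℤ, ∀ v ∈ U k, (a + k) • v + R.expSumL q m v ∈ U (m + k)
  expSumI_mem : ∀ k : ℤ, ∀ b ∈ B, ∀ v ∈ U k, R.expSumI h b v ∈ U (b + k)

namespace IsComponentFamily

variable {a : ℂ} {B : Set ℤ} {U : ℤ → Submodule ℂ R.V}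

theorem invariant_iSup (hU : IsComponentFamily R a h q B U) (hB : B.Infinite)
    (hLq : ∀ l, q < l → R.LV l = 0) (hIh : ∀ e, h < e → R.IV e = 0) :
    R.Invariant (⨆ k, U k) := by
  refine ⟨fun l => ?_, fun e he => ?_⟩
  · refine fun v hv => (iSup_le (fun k => ?_) : ⨆ k, U k ≤ (⨆ k, U k).comap (R.LV l)) hv
    intro v hv
    refine Submodule.mem_comap.mpr <|
      LV_mem_of_forall_expSumL_mem hLq Set.infinite_univ (fun m _ => ?_) l
    have hsum := le_iSup U (m + k) (hU.expSumL_mem k m v hv)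
    have hv' := le_iSup U k ((U k).smul_mem (a + k) hv)
    simpa using sub_mem hsum hv'
  · refine fun v hv => (iSup_le (fun k => ?_) : ⨆ k, U k ≤ (⨆ k, U k).comap (R.IV e)) hv
    intro v hv
    exact Submodule.mem_comap.mpr <| IV_mem_of_forall_expSumI_mem hIh hB
      (fun b hb => le_iSup U (b + k) (hU.expSumI_mem k b hb v hv)) he

theorem invariant_iInf (hU : IsComponentFamily R a h q B U) (hB : B.Infinite)
    (hLq : ∀ l, q < l → R.LV l = 0) (hIh : ∀ e, h < e → R.IV e = 0) :
    R.Invariant (⨅ k, U k) := by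
  refine ⟨fun l v hv => ?_, fun e he v hv => ?_⟩ <;> rw [Submodule.mem_iInf] at hv ⊢ <;>
    intro t
  · refine LV_mem_of_forall_expSumL_mem hLq Set.infinite_univ (fun m _ => ?_) l
    have hsum := hU.expSumL_mem (t - m) m v (hv _)
    rw [add_sub_cancel] at hsum
    simpa using sub_mem hsum ((U t).smul_mem (a + (t - m : ℤ)) (hv t))
  · refine IV_mem_of_forall_expSumI_mem hIh hB (fun b hb => ?_) he
    simpa using hU.expSumI_mem (t - b) b hb v (hv _)

theorem IV_LV_mem (hU : IsComponentFamily R a h q B U) (hB : B.Infinite) (hnh : n ≤ h)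
    {k : ℤ} {v : R.V} (hv : v ∈ U k) (t : ℤ) : R.IV h (R.LV q v) ∈ U t := by
  refine IV_LV_mem_of_forall_expSumI_expSumL_mem hB hnh (c := a + k) (r := t - k) fun b hb => ?_
  have hL := hU.expSumL_mem k (t - b - k) v hv
  rw [sub_add_cancel] at hL
  simpa [sub_right_comm] using hU.expSumI_mem (t - b) b hb _ hL

theorem eq_top (hU : IsComponentFamily R a h q B U) (hB : B.Infinite) (hR : R.IsSimple)
    (hlev : R.AnnLevel h q) (hne : ∃ k, U k ≠ ⊥) (t : ℤ) : U t = ⊤ := by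
  have hLq : ∀ l, q < l → R.LV l = 0 := fun _ => hlev.LV_eq_zero
  have hIh : ∀ e, h < e → R.IV e = 0 := fun _ => hlev.IV_eq_zero
  have hsup : ⨆ k, U k = ⊤ := by
    refine (hR.eq_bot_or_eq_top (hU.invariant_iSup hB hLq hIh)).resolve_left fun hbot => ?_
    obtain ⟨k, hk⟩ := hne
    exact hk (eq_bot_iff.mpr (hbot ▸ le_iSup U k))
  have hIL : ∀ v, R.IV h (R.LV q v) ∈ ⨅ t, U t := fun v => Submodule.mem_iInf _ |>.mpr fun t =>
    (iSup_le fun k w hw => hU.IV_LV_mem hB hlev.1 hw t :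
      ⨆ k, U k ≤ (U t).comap (R.IV h ∘ₗ R.LV q)) (hsup ▸ Submodule.mem_top)
  have hinf : ⨅ t, U t = ⊤ := by
    refine (hR.eq_bot_or_eq_top (hU.invariant_iInf hB hLq hIh)).resolve_left fun hbot => ?_
    obtain ⟨v, hv⟩ : ∃ v, R.LV q v ≠ 0 := by
      by_contra! h0
      exact hlev.LV_ne_zero (LinearMap.ext h0)
    have hker : R.LV q v ∈ LinearMap.ker (R.IV h) := by
      simpa [hbot] using hIL v
    rw [ker_IV_eq_bot hR hlev.1 hIh hlev.IV_ne_zero] at hker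
    exact hv hker
  exact top_unique (hinf ▸ iInf_le U t)

end IsComponentFamily

end THVRep

namespace IsTHVAction

open Finset

variable {T : TwistedHV} {p : ℕ} {d : ℕ → ℕ} {a : ℂ} {n : ℕ} {R : THVRep n}
  {ρ : T.T →ₗ⁅ℂ⁆ Module.End ℂ (ℤ →₀ R.V)}

theorem mapsTo_of_L_I (hρ : IsTHVAction T p d a R ρ) {W : Submodule ℂ (ℤ →₀ R.V)}
    (hL : ∀ m, ∀ f ∈ W, ρ (T.L m) f ∈ W) (hI : ∀ b, ∀ f ∈ W, ρ (T.I b) f ∈ W) (x : T.T) :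
    ∀ f ∈ W, ρ x f ∈ W := by
  set S := (W.compatibleMaps W).comap (ρ : T.T →ₗ[ℂ] Module.End ℂ (ℤ →₀ R.V))
  have hC : ∀ y, ρ y = 0 → y ∈ S := fun y hy f _ => by simp [hy]
  have hS : S = ⊤ := T.eq_top_of_generators_mem (fun m _ => hL m _) (fun b _ => hI b _)
    (hC _ hρ.2.2.1) (hC _ hρ.2.2.2.1) (hC _ hρ.2.2.2.2)
  exact fun f => (hS ▸ Submodule.mem_top : x ∈ S) (x := f)

theorem L_single (hρ : IsTHVAction T p d a R ρ) {q : ℕ} (hLq : ∀ l, q < l → R.LV l = 0)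
    (m k : ℤ) (v : R.V) :
    ρ (T.L m) (Finsupp.single k v) = Finsupp.single (m + k) ((a + k) • v + R.expSumL q m v) := by
  rw [hρ.1, finsum_eq_finsetSum_of_support_subset (s := range (q + 1)), Finsupp.single_add,
    THVRep.expSumL, Finsupp.single_finsetSum, Finsupp.smul_single]
  · simp only [Finsupp.smul_single]
  intro l hl
  by_contra hlq
  simp_all [hLq l (by simpa using hlq)]

theorem I_single (hρ : IsTHVAction T p d a R ρ) {h : ℕ} (hIh : ∀ e, h < e → R.IV e = 0)
    {b : ℤ} (hb : d ((b % p).toNat) = n) (k : ℤ) (v : R.V) :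
    ρ (T.I b) (Finsupp.single k v) = Finsupp.single (b + k) (R.expSumI h b v) := by
  rw [hρ.2.1, hb, finsum_eq_finsetSum_of_support_subset (s := range (h + 1 - n)),
    THVRep.expSumI, sum_Ico_eq_sum_range, Finsupp.single_finsetSum]
  · simp only [Finsupp.smul_single, add_comm n]
  intro j hj
  by_contra hjh
  simp_all [hIh (j + n) (by simp at hjh; omega)]

theorem L_zero_apply (hρ : IsTHVAction T p d a R ρ) (f : ℤ →₀ R.V) (i : ℤ) :
    ρ (T.L 0) f i = (a + i) • f i := by
  induction f using Finsupp.induction_linear with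
  | zero => simp
  | add f g hf hg => simp [hf, hg]
  | single k v =>
    rw [hρ.1]
    rcases eq_or_ne k i with rfl | hki <;> simp [*]

theorem mapsTo_finsuppSubmodule (hρ : IsTHVAction T p d a R ρ)
    (hdn : ∀ b : ℤ, n ≤ d ((b % p).toNat)) {W : Submodule ℂ R.V} (hW : R.Invariant W) (x : T.T) :
    ∀ f ∈ Finsupp.submodule (fun _ : ℤ => W), ρ x f ∈ Finsupp.submodule (fun _ : ℤ => W) := by
  set W' := Finsupp.submodule fun _ : ℤ => W
  have hsingle : ∀ k, ∀ v ∈ W, Finsupp.single k v ∈ W' := fun k v hv => by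
    rwa [← Finsupp.comap_lsingle_submodule (fun _ : ℤ => W) k] at hv
  have hsum : ∀ g : ℕ → (ℤ →₀ R.V), (∀ j, g j ∈ W') → ∑ᶠ j, g j ∈ W' := fun g hg =>
    finsum_induction (· ∈ W') W'.zero_mem (fun _ _ => W'.add_mem) hg
  have hsingles : ∀ y : T.T, (∀ k, ∀ v ∈ W, ρ y (Finsupp.single k v) ∈ W') → ∀ f ∈ W', ρ y f ∈ W' :=
    fun y hy => ((Finsupp.submodule_eq_iSup _).le.trans (iSup_le fun k =>
      Submodule.map_le_iff_le_comap.mpr fun v hv => hy k v hv) : W' ≤ W'.comap (ρ y))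
  refine hρ.mapsTo_of_L_I (fun m => hsingles _ fun k v hv => ?_)
    (fun b => hsingles _ fun k v hv => ?_) x
  · rw [hρ.1]
    exact W'.add_mem (W'.smul_mem _ (hsingle _ v hv))
      (hsum _ fun j => W'.smul_mem _ (hsingle _ _ (hW.1 j v hv)))
  · rw [hρ.2.1]
    exact hsum _ fun j => W'.smul_mem _ (hsingle _ _ (hW.2 _ (le_add_left (hdn b)) v hv))

theorem isSimple_of_isIrreducibleRep (hρ : IsTHVAction T p d a R ρ)
    (hdn : ∀ b : ℤ, n ≤ d ((b % p).toNat)) (hV : ∃ v : R.V, v ≠ 0) (hirr : IsIrreducibleRep ρ) :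
    R.IsSimple := by
  refine ⟨hV, fun W hL hI => ?_⟩
  rcases hirr.2 _ (hρ.mapsTo_finsuppSubmodule hdn ⟨hL, hI⟩) with hbot | htop
  · left
    simpa using congr_arg (Submodule.comap (Finsupp.lsingle 0)) hbot
  · right
    simpa using congr_arg (Submodule.comap (Finsupp.lsingle 0)) htop

theorem isComponentFamily (hρ : IsTHVAction T p d a R ρ) {h q : ℕ} (hlev : R.AnnLevel h q)
    {W : Submodule ℂ (ℤ →₀ R.V)} (hW : ∀ x, ∀ f ∈ W, ρ x f ∈ W) :
    R.IsComponentFamily a h q {b | d ((b % p).toNat) = n}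
      (fun k => W.comap (Finsupp.lsingle k)) where
  expSumL_mem k m v hv := by
    simpa [← hρ.L_single fun _ => hlev.LV_eq_zero] using hW _ _ hv
  expSumI_mem k b hb v hv := by
    simpa [← hρ.I_single (fun _ => hlev.IV_eq_zero) hb] using hW _ _ hv

theorem isIrreducibleRep_of_isSimple (hρ : IsTHVAction T p d a R ρ) {h q : ℕ}
    (hlev : R.AnnLevel h q) (hB : {b : ℤ | d ((b % p).toNat) = n}.Infinite)
    (hR : R.IsSimple) : IsIrreducibleRep ρ := by
  obtain ⟨v, hv⟩ := hR.1
  refine ⟨⟨Finsupp.single 0 v, by simpa using hv⟩, fun W hW => ?_⟩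
  have hgraded := Finsupp.eq_submodule_comap_lsingle_of_diagonal (W := W)
    (add_right_injective a |>.comp Int.cast_injective) hρ.L_zero_apply (hW _)
  by_cases hne : ∃ k, W.comap (Finsupp.lsingle k) ≠ ⊥
  · right
    rw [hgraded, funext ((hρ.isComponentFamily hlev hW).eq_top hB hR hlev hne)]
    exact Finsupp.submodule_top
  · left
    rw [hgraded, funext (not_exists_not.mp hne)]
    exact eq_bot_iff.mpr fun f hf => Finsupp.ext fun i => (Submodule.mem_bot ℂ).mp (hf i)

end IsTHVAction

theorem thv_module_irreducible_iff_general (p : ℕ) (hp : 1 < p) (T : TwistedHV) (a : ℂ)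
    (h q : ℕ) (d : ℕ → ℕ)
    (R : THVRep (dmin p d)) (hlev : R.AnnLevel h q)
    (ρ : T.T →ₗ⁅ℂ⁆ Module.End ℂ (ℤ →₀ R.V)) (hρ : IsTHVAction T p d a R ρ) :
    IsIrreducibleRep ρ ↔ R.IsSimple := by
  have hp0 : 0 < p := by omega
  refine ⟨hρ.isSimple_of_isIrreducibleRep (fun b => dmin_le_of_lt (Int.toNat_emod_lt hp0 b)) ?_,
    hρ.isIrreducibleRep_of_isSimple hlev (infinite_setOf_eq_dmin hp0)⟩
  obtain ⟨v, hv⟩ := hlev.2.1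
  exact ⟨v, fun h0 => hv (by rw [h0, map_zero])⟩

/-- the `𝔗`-module `M(V, a, d)` is irreducible if and only if the
`𝔗_{min(d 0, …, d (p-1))}`-module `V` is irreducible. -/
theorem thv_module_irreducible_iff (p : ℕ) (hp : 1 < p) (T : TwistedHV) (a : ℂ)
    (h q : ℕ) (d : ℕ → ℕ) (hd : ∀ i, d i ≤ 1)
    (R : THVRep (dmin p d)) (hlev : R.AnnLevel h q)
    (ρ : T.T →ₗ⁅ℂ⁆ Module.End ℂ (ℤ →₀ R.V)) (hρ : IsTHVAction T p d a R ρ) :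
    IsIrreducibleRep ρ ↔ R.IsSimple :=
  thv_module_irreducible_iff_general p hp T a h q d R hlev ρ hρ
end

section
/- The gap-2 Virasoro algebra 𝔤 (the gap-p Virasoro algebra with p = 2) is isomorphic as a complex Lie algebra to the mirror Heisenberg–Virasoro algebra 𝕄; more precisely, there exists a Lie algebra isomorphism φ : 𝔤 → 𝕄 with φ(L_{2m}) = 2 d_{−m} and φ(I_{2m+1}) = 2 h_{−m−1/2} for all m ∈ ℤ, φ(C_1) = −2 l, and φ(C_0) a scalar multiple of c. -/
open Finsupp TensorProduct

attribute [local instance 100] LieRing.ofAssociativeRing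

/-!
Rescale by `2` and reverse the grading: `L_{2m} ↦ 2 d_{-m}`, `I_{2m+1} ↦ 2 h_{-m-1/2}`. Then
`[L_{2m}, L_{2n}]` and `4 [d_{-m}, d_{-n}]` have the same non-central part, and since the Virasoro
cocycle is odd in `m` this forces `C_0 ↦ -4 c`; likewise `[I_{2m+1}, I_{-2m-1}] = (2m+1) C_1`
against `4 [h_{-m-1/2}, h_{m+1/2}] = -2 (2m+1) l` forces `C_1 ↦ -2 l`. The assignment sends a basis
to a rescaled basis, so it is a linear isomorphism, and bracket compatibility only has to be
checked on pairs of basis vectors.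
-/

section LieOfBasis

variable {R L L' ι : Type*} [CommRing R] [LieRing L] [LieAlgebra R L]
  [LieRing L'] [LieAlgebra R L']

theorem LinearMap.map_lie_of_basis (b : Module.Basis ι R L) (f : L →ₗ[R] L')
    (h : ∀ i j, f ⁅b i, b j⁆ = ⁅f (b i), f (b j)⁆) (x y : L) : f ⁅x, y⁆ = ⁅f x, f y⁆ := by
  have key : (LieAlgebra.ad R L).toLinearMap.compr₂ f =
      (LieAlgebra.ad R L').toLinearMap.compl₁₂ f f :=
    LinearMap.ext_basis b b fun i j => by simpa using h i j
  simpa using LinearMap.congr_fun₂ key x y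

theorem LinearMap.map_lie_swap (f : L →ₗ[R] L') {x y : L} (h : f ⁅x, y⁆ = ⁅f x, f y⁆) :
    f ⁅y, x⁆ = ⁅f y, f x⁆ := by
  rw [← lie_skew, map_neg, h, lie_skew]

def LinearEquiv.toLieEquiv (e : L ≃ₗ[R] L') (h : ∀ x y, e ⁅x, y⁆ = ⁅e x, e y⁆) :
    L ≃ₗ⁅R⁆ L' :=
  { e with map_lie' := h _ _ }

end LieOfBasis

namespace GapVirasoro

abbrev gap2Index : Type := ℤ ⊕ {b : ℤ // ¬ ((2 : ℕ) : ℤ) ∣ b} ⊕ {j : ℕ // j ≤ 2 / 2}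

variable (G : GapVirasoro 2) (M : MirrorHV)

theorem basis_eq_Lg_or_Ig_or_Cg (i : gap2Index) :
    (∃ m, G.basis i = G.Lg m) ∨ (∃ m, G.basis i = G.Ig (2 * m + 1)) ∨
      ∃ j ≤ 2 / 2, G.basis i = G.Cg j := by
  rcases i with m | ⟨b, hb⟩ | ⟨j, hj⟩
  · exact Or.inl ⟨m, G.basis_eq _⟩
  · obtain ⟨m, rfl⟩ : ∃ m, b = 2 * m + 1 := ⟨b / 2, by omega⟩
    exact Or.inr (Or.inl ⟨m, G.basis_eq _⟩)
  · exact Or.inr (Or.inr ⟨j, hj, G.basis_eq _⟩)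

/-- `2m+1 ↦ -m-1`; recall that `M.h n` stands for `h_{n+1/2}`. -/
def oddIndexEquiv : {b : ℤ // ¬ ((2 : ℕ) : ℤ) ∣ b} ≃ ℤ where
  toFun b := -(b.1 / 2) - 1
  invFun n := ⟨-2 * n - 1, by omega⟩
  left_inv b := by
    obtain ⟨b, hb⟩ := b
    simp only [Nat.cast_ofNat, Subtype.mk.injEq] at hb ⊢
    omega
  right_inv n := by simp only; omega

def centralIndexEquiv : {j : ℕ // j ≤ 2 / 2} ≃ Fin 2 where
  toFun j := ⟨j.1, by omega⟩
  invFun i := ⟨i.1, by omega⟩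

def mirrorIndexEquiv : gap2Index ≃ ℤ ⊕ ℤ ⊕ Fin 2 :=
  Equiv.sumCongr (Equiv.neg ℤ) (Equiv.sumCongr oddIndexEquiv centralIndexEquiv)

def mirrorWeight : ℤ ⊕ ℤ ⊕ Fin 2 → ℂ :=
  Sum.elim (fun _ => 2) (Sum.elim (fun _ => 2) ![-4, -2])

theorem isUnit_mirrorWeight (i : ℤ ⊕ ℤ ⊕ Fin 2) : IsUnit (mirrorWeight i) := by
  refine isUnit_iff_ne_zero.mpr ?_
  rcases i with _ | _ | i
  · simp [mirrorWeight]
  · simp [mirrorWeight]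
  · fin_cases i <;> simp [mirrorWeight]

noncomputable def toMirror : G.g ≃ₗ[ℂ] M.M :=
  G.basis.equiv (M.basis.isUnitSMul isUnit_mirrorWeight) mirrorIndexEquiv

theorem toMirror_basis (i : gap2Index) :
    toMirror G M (G.basis i) =
      mirrorWeight (mirrorIndexEquiv i) • M.basis (mirrorIndexEquiv i) := by
  rw [toMirror, Module.Basis.equiv_apply, Module.Basis.isUnitSMul_apply]

theorem toMirror_Lg (m : ℤ) : toMirror G M (G.Lg m) = (2 : ℂ) • M.d (-m) := by
  simpa [G.basis_eq, M.basis_eq, mirrorIndexEquiv, mirrorWeight] using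
    toMirror_basis G M (Sum.inl m)

theorem toMirror_Ig (m : ℤ) : toMirror G M (G.Ig (2 * m + 1)) = (2 : ℂ) • M.h (-m - 1) := by
  have hodd : ¬ ((2 : ℕ) : ℤ) ∣ 2 * m + 1 := by omega
  have hidx : -((2 * m + 1) / 2) - 1 = -m - 1 := by omega
  simpa [G.basis_eq, M.basis_eq, mirrorIndexEquiv, oddIndexEquiv, mirrorWeight, hidx] using
    toMirror_basis G M (Sum.inr (Sum.inl ⟨_, hodd⟩))

theorem toMirror_Cg_zero : toMirror G M (G.Cg 0) = (-4 : ℂ) • M.c := by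
  simpa [G.basis_eq, M.basis_eq, mirrorIndexEquiv, centralIndexEquiv, mirrorWeight] using
    toMirror_basis G M (Sum.inr (Sum.inr ⟨0, by norm_num⟩))

theorem toMirror_Cg_one : toMirror G M (G.Cg 1) = (-2 : ℂ) • M.l := by
  simpa [G.basis_eq, M.basis_eq, mirrorIndexEquiv, centralIndexEquiv, mirrorWeight] using
    toMirror_basis G M (Sum.inr (Sum.inr ⟨1, by norm_num⟩))

theorem toMirror_lie_Lg_Lg (m n : ℤ) :
    toMirror G M ⁅G.Lg m, G.Lg n⁆ = ⁅toMirror G M (G.Lg m), toMirror G M (G.Lg n)⁆ := by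
  rw [G.bracket_LL, toMirror_Lg, toMirror_Lg, smul_lie, lie_smul, M.bracket_dd, map_add,
    map_smul, toMirror_Lg, show -m + -n = -(m + n) by ring]
  by_cases hmn : m + n = 0
  · rw [if_pos hmn, if_pos (by omega), map_smul, toMirror_Cg_zero]
    push_cast
    match_scalars <;> ring
  · rw [if_neg hmn, if_neg (by omega), map_zero]
    push_cast
    match_scalars
    ring

theorem toMirror_lie_Lg_Ig (m n : ℤ) :
    toMirror G M ⁅G.Lg m, G.Ig (2 * n + 1)⁆ =
      ⁅toMirror G M (G.Lg m), toMirror G M (G.Ig (2 * n + 1))⁆ := by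
  rw [G.bracket_LI m _ (by omega),
    show ((2 : ℕ) : ℤ) * m + (2 * n + 1) = 2 * (m + n) + 1 by push_cast; ring, map_smul,
    toMirror_Ig, toMirror_Lg, toMirror_Ig, smul_lie, lie_smul, M.bracket_dh,
    show -m + (-n - 1) = -(m + n) - 1 by ring]
  push_cast
  match_scalars
  ring

theorem toMirror_lie_Ig_Ig (m n : ℤ) :
    toMirror G M ⁅G.Ig (2 * m + 1), G.Ig (2 * n + 1)⁆ =
      ⁅toMirror G M (G.Ig (2 * m + 1)), toMirror G M (G.Ig (2 * n + 1))⁆ := by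
  have hmod : ((2 * m + 1) % ((2 : ℕ) : ℤ)).toNat = 1 := by omega
  rw [G.bracket_II _ _ (by omega) (by omega), hmod, toMirror_Ig, toMirror_Ig, smul_lie, lie_smul,
    M.bracket_hh]
  by_cases hmn : 2 * m + 1 + (2 * n + 1) = 0
  · rw [if_pos hmn, if_pos (by omega), map_smul, show min 1 (2 - 1) = 1 from rfl,
      toMirror_Cg_one]
    push_cast
    match_scalars
    ring
  · rw [if_neg hmn, if_neg (by omega), map_zero, smul_zero, smul_zero]

theorem toMirror_lie_Cg {j : ℕ} (hj : j ≤ 2 / 2) (x : G.g) :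
    toMirror G M ⁅G.Cg j, x⁆ = ⁅toMirror G M (G.Cg j), toMirror G M x⁆ := by
  rw [G.central_C j hj x, map_zero]
  interval_cases j
  · rw [toMirror_Cg_zero, smul_lie, M.central_c, smul_zero]
  · rw [toMirror_Cg_one, smul_lie, M.central_l, smul_zero]

theorem toMirror_lie (x y : G.g) :
    toMirror G M ⁅x, y⁆ = ⁅toMirror G M x, toMirror G M y⁆ := by
  refine LinearMap.map_lie_of_basis G.basis (toMirror G M).toLinearMap (fun i j => ?_) x y
  simp only [LinearEquiv.coe_coe]
  rcases G.basis_eq_Lg_or_Ig_or_Cg i with ⟨m, hi⟩ | ⟨m, hi⟩ | ⟨k, hk, hi⟩ <;>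
    rcases G.basis_eq_Lg_or_Ig_or_Cg j with ⟨n, hj⟩ | ⟨n, hj⟩ | ⟨l, hl, hj⟩ <;>
    rw [hi, hj]
  · exact toMirror_lie_Lg_Lg G M m n
  · exact toMirror_lie_Lg_Ig G M m n
  · exact LinearMap.map_lie_swap _ (toMirror_lie_Cg G M hl _)
  · exact LinearMap.map_lie_swap _ (toMirror_lie_Lg_Ig G M n m)
  · exact toMirror_lie_Ig_Ig G M m n
  · exact LinearMap.map_lie_swap _ (toMirror_lie_Cg G M hl _)
  all_goals exact toMirror_lie_Cg G M hk _

end GapVirasoro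

/-- the gap-2 Virasoro algebra is isomorphic to the mirror
Heisenberg-Virasoro algebra via `L_{2m} ↦ 2 d_{-m}`, `I_{2m+1} ↦ 2 h_{-m-1/2}`,
`C_1 ↦ -2 l`, and `C_0` mapping to a scalar multiple of `c`. -/
theorem gap2_iso_mirror (G : GapVirasoro 2) (M : MirrorHV) :
    ∃ φ : G.g ≃ₗ⁅ℂ⁆ M.M,
      (∀ m : ℤ, φ (G.Lg m) = (2 : ℂ) • M.d (-m)) ∧
      (∀ m : ℤ, φ (G.Ig (2 * m + 1)) = (2 : ℂ) • M.h (-m - 1)) ∧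
      φ (G.Cg 1) = (-2 : ℂ) • M.l ∧
      (∃ lam : ℂ, φ (G.Cg 0) = lam • M.c) :=
  ⟨(G.toMirror M).toLieEquiv (G.toMirror_lie M), G.toMirror_Lg M, G.toMirror_Ig M,
    G.toMirror_Cg_one M, -4, G.toMirror_Cg_zero M⟩
end
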